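/- Let (X,U), (Y,V), (Z,W) be U-equivalence spaces with U rich and (X,U) connected, let α,β : X → Y be U-equivalently continuous, φ : Y → Z transverse to Y, suppose φ ∘ α = φ ∘ β and α(x₀) = β(x₀) for some x₀ ∈ X. Then α = β. -/

import Mathlib

/-- `U` is an equivalence relation on `X`, viewed as a subset of `X × X`. -/
def IsEquivRel {X : Type*} (U : Set (X × X)) : Prop :=
  (∀ x, (x, x) ∈ U) ∧ (∀ x y, (x, y) ∈ U → (y, x) ∈ U) ∧
    (∀ x y z, (x, y) ∈ U → (y, z) ∈ U → (x, z) ∈ U)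

/-- A `U`-equivalence class on `X`: a nonempty collection of equivalence relations
closed under binary intersections. -/
def IsUClass {X : Type*} (𝒰 : Set (Set (X × X))) : Prop :=
  𝒰.Nonempty ∧ (∀ U ∈ 𝒰, IsEquivRel U) ∧ ∀ U ∈ 𝒰, ∀ V ∈ 𝒰, U ∩ V ∈ 𝒰

/-- `(f × f)⁻¹(V)`. -/
def preim2 {X Y : Type*} (f : X → Y) (V : Set (Y × Y)) : Set (X × X) :=
  {p | (f p.1, f p.2) ∈ V}

/-- `f : (X,𝒰) → (Y,𝒱)` is `U`-equivalently continuous. -/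
def UCont {X Y : Type*} (𝒰 : Set (Set (X × X))) (𝒱 : Set (Set (Y × Y))) (f : X → Y) : Prop :=
  ∀ V ∈ 𝒱, preim2 f V ∈ 𝒰

/-- `U[x] = {y | (x,y) ∈ U}`. -/
def cls {X : Type*} (U : Set (X × X)) (x : X) : Set X := {y | (x, y) ∈ U}

/-- The collection of all finite nonempty intersections of members of `S`. -/
def genClass {X : Type*} (S : Set (Set (X × X))) : Set (Set (X × X)) :=
  {U | ∃ T : Finset (Set (X × X)), ↑T ⊆ S ∧ T.Nonempty ∧ U = ⋂₀ ↑T}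

/-- The relative class `𝒱/A`, transported to the subtype `A`. -/
def relClass {Y : Type*} (𝒱 : Set (Set (Y × Y))) (A : Set Y) : Set (Set (A × A)) :=
  preim2 (Subtype.val : A → Y) '' 𝒱

/-- `f : (X,𝒰) → (Y,𝒱)` is `U`-equivalently open. -/
def UOpenMap {X Y : Type*} (𝒰 : Set (Set (X × X))) (𝒱 : Set (Set (Y × Y))) (f : X → Y) : Prop :=
  ∀ U ∈ 𝒰, ∃ V ∈ 𝒱, ∀ x, cls V (f x) ⊆ f '' cls U x

/-- The topology induced by a `U`-equivalence class, generated by the base `{U[x]}`. -/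
def UTop {X : Type*} (𝒰 : Set (Set (X × X))) : TopologicalSpace X :=
  TopologicalSpace.generateFrom {S | ∃ U ∈ 𝒰, ∃ x, S = cls U x}

/-- The product `U`-equivalence class, generated by preimages under the projections. -/
def prodClass {I : Type*} {X : I → Type*} (𝒰 : ∀ i, Set (Set (X i × X i))) :
    Set (Set ((∀ i, X i) × (∀ i, X i))) :=
  genClass {S | ∃ i, ∃ U ∈ 𝒰 i, S = preim2 (fun f => f i) U}

/-- A `U`-equivalence: a bijection which is `U`-equivalently continuous with
`U`-equivalently continuous inverse. -/
def IsUEquiv {X Y : Type*} (𝒰 : Set (Set (X × X))) (𝒱 : Set (Set (Y × Y))) (f : X → Y) : Prop :=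
  Function.Bijective f ∧ UCont 𝒰 𝒱 f ∧
    ∃ g : Y → X, Function.LeftInverse g f ∧ Function.RightInverse g f ∧ UCont 𝒱 𝒰 g

/-- A `U`-embedding: injective, and a `U`-equivalence onto its range with the relative class. -/
def IsUEmbedding {X Y : Type*} (𝒰 : Set (Set (X × X))) (𝒱 : Set (Set (Y × Y))) (f : X → Y) :
    Prop :=
  Function.Injective f ∧ IsUEquiv 𝒰 (relClass 𝒱 (Set.range f)) (Set.rangeFactorization f)

/-- Total boundedness of a `U`-equivalence space. -/
def TotallyBddU {X : Type*} (𝒰 : Set (Set (X × X))) : Prop :=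
  ∀ U ∈ 𝒰, ∃ t : Finset X, ∀ x : X, ∃ y ∈ t, (y, x) ∈ U

/-- `φ : (Y,𝒱) → Z` is transverse to `Y`: `(φ×φ)⁻¹(ΔZ) ∩ V = ΔY` for some `V ∈ 𝒱`. -/
def Transv {Y Z : Type*} (𝒱 : Set (Set (Y × Y))) (φ : Y → Z) : Prop :=
  ∃ V ∈ 𝒱, ∀ y y', (y, y') ∈ V → φ y = φ y' → y = y'

/-- `f : X → (Y,𝒱)` is a `U`-equivalent surjection. -/
def USurjOn {X Y : Type*} (𝒱 : Set (Set (Y × Y))) (f : X → Y) : Prop :=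
  ∀ y : Y, ∀ V ∈ 𝒱, ∃ x : X, y ∈ cls V (f x)

/-- `D` is `U`-equivalently dense in `(X,𝒰)`. -/
def UDense {X : Type*} (𝒰 : Set (Set (X × X))) (D : Set X) : Prop :=
  ∀ x : X, ∀ U ∈ 𝒰, ∃ a ∈ D, (a, x) ∈ U

/-! The points where `α` and `β` agree form a set which is closed under the single relation
`(α × α)⁻¹ V ∩ (β × β)⁻¹ V ∈ 𝒰`, where `V` witnesses transversality: if `α x = β x` and `x'` is
related to `x`, then `α x'` and `β x'` are `V`-related and have the same image under `φ`, so they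
coincide. A set closed under a relation of `𝒰` is clopen in the induced topology, and it is
nonempty because it contains `x₀`; connectedness finishes the proof. -/

open scoped Topology

section UTop

variable {X : Type*} {𝒰 : Set (Set (X × X))} {U : Set (X × X)} {S : Set X}

lemma isOpen_cls (hU : U ∈ 𝒰) (x : X) : IsOpen[UTop 𝒰] (cls U x) :=
  TopologicalSpace.GenerateOpen.basic _ ⟨U, hU, x, rfl⟩

lemma isOpen_uTop_of_invariant (hU : U ∈ 𝒰) (hrefl : ∀ x, (x, x) ∈ U)
    (hS : ∀ x y, (x, y) ∈ U → x ∈ S → y ∈ S) : IsOpen[UTop 𝒰] S :=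
  let _ : TopologicalSpace X := UTop 𝒰
  isOpen_iff_forall_mem_open.2 fun x hx =>
    ⟨cls U x, fun _ hy => hS x _ hy hx, isOpen_cls hU x, hrefl x⟩

lemma isClopen_uTop_of_invariant (hU : U ∈ 𝒰) (hUeq : IsEquivRel U)
    (hS : ∀ x y, (x, y) ∈ U → x ∈ S → y ∈ S) : @IsClopen X (UTop 𝒰) S := by
  let _ : TopologicalSpace X := UTop 𝒰
  obtain ⟨hrefl, hsymm, -⟩ := hUeq
  refine ⟨⟨isOpen_uTop_of_invariant hU hrefl ?_⟩, isOpen_uTop_of_invariant hU hrefl hS⟩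
  exact fun x y hxy hx hy => hx (hS y x (hsymm x y hxy) hy)

end UTop

lemma eq_of_eq_of_transv {X Y Z : Type*} {V : Set (Y × Y)} (hV : IsEquivRel V) {φ : Y → Z}
    (hsep : ∀ y y', (y, y') ∈ V → φ y = φ y' → y = y') {α β : X → Y} (hcomm : φ ∘ α = φ ∘ β)
    {x x' : X} (hxx' : (x, x') ∈ preim2 α V ∩ preim2 β V) (hx : α x = β x) : α x' = β x' := by
  obtain ⟨-, hsymm, htrans⟩ := hV
  obtain ⟨hαV, hβV⟩ := hxx'
  have hα'β : (α x', β x) ∈ V := hx ▸ hsymm _ _ hαV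
  exact hsep _ _ (htrans _ _ _ hα'β hβV) (congrFun hcomm x')

theorem stmt16_general {X Y Z : Type*} (𝒰 : Set (Set (X × X))) (𝒱 : Set (Set (Y × Y)))
    (h𝒰 : IsUClass 𝒰) (h𝒱 : IsUClass 𝒱)
    (hconn : @ConnectedSpace X (UTop 𝒰))
    (α β : X → Y) (hα : UCont 𝒰 𝒱 α) (hβ : UCont 𝒰 𝒱 β)
    (φ : Y → Z) (hφ : Transv 𝒱 φ) (hcomm : φ ∘ α = φ ∘ β)
    (x₀ : X) (hx₀ : α x₀ = β x₀) :
    α = β := by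
  let _ : TopologicalSpace X := UTop 𝒰
  obtain ⟨V, hV, hsep⟩ := hφ
  have hU : preim2 α V ∩ preim2 β V ∈ 𝒰 := h𝒰.2.2 _ (hα V hV) _ (hβ V hV)
  have hclopen : IsClopen {x | α x = β x} :=
    isClopen_uTop_of_invariant hU (h𝒰.2.1 _ hU) fun _ _ hxx' hx =>
      eq_of_eq_of_transv (h𝒱.2.1 V hV) hsep hcomm hxx' hx
  have huniv : {x | α x = β x} = Set.univ := hclopen.eq_univ ⟨x₀, hx₀⟩
  exact funext fun x => Set.eq_univ_iff_forall.1 huniv x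

theorem stmt16 {X Y Z : Type*} (𝒰 : Set (Set (X × X))) (𝒱 : Set (Set (Y × Y)))
    (𝒲 : Set (Set (Z × Z))) (h𝒰 : IsUClass 𝒰) (h𝒱 : IsUClass 𝒱) (h𝒲 : IsUClass 𝒲)
    (hrich : (Set.univ : Set (X × X)) ∈ 𝒰)
    (hconn : @ConnectedSpace X (UTop 𝒰))
    (α β : X → Y) (hα : UCont 𝒰 𝒱 α) (hβ : UCont 𝒰 𝒱 β)
    (φ : Y → Z) (hφ : Transv 𝒱 φ) (hcomm : φ ∘ α = φ ∘ β)
    (x₀ : X) (hx₀ : α x₀ = β x₀) :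
    α = β :=
  stmt16_general 𝒰 𝒱 h𝒰 h𝒱 hconn α β hα hβ φ hφ hcomm x₀ hx₀
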